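/- arXiv:0706.4097 — 3 statements merged into one kernel-verified Lean document; each statement's English description precedes it below -/
import Mathlib

section
/- Let G be a group acting continuously on topological spaces E, B and X, let A ⊆ X be a closed G-invariant subset, and let p : E → B be an equivariant continuous map admitting a regular G-lifting function. Assume there is an equivariant strong deformation retraction of X × I onto X × {0} ∪ A × I, i.e. an equivariant continuous D : (X × I) × I → X × I with D(z,0) = z, D(z,1) ∈ X × {0} ∪ A × I for all z, and D(z,s) = z for all z ∈ X × {0} ∪ A × I and all s (this property holds for every G-ANR pair (X,A)). Then for every equivariant continuous f : X × {0} ∪ A × I → E and equivariant continuous h : X × I → B with p(f(z)) = h(z) for all z ∈ X × {0} ∪ A × I, there exists an equivariant continuous map f̃ : X × I → E which extends f and satisfies p ∘ f̃ = h. -/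
/-- The diagonal `G`-action on the space `Ω_p = {(e,w) ∈ E × C(I,B) : p e = w 0}`. -/
def omegaSmul {G E B : Type*} [Group G] [TopologicalSpace E] [TopologicalSpace B]
    [MulAction G E] [MulAction G B] [ContinuousConstSMul G E] [ContinuousConstSMul G B]
    (p : E → B) (hpe : ∀ (g : G) (e : E), p (g • e) = g • p e) (g : G)
    (q : {q : E × C(unitInterval, B) // p q.1 = q.2 0}) :
    {q : E × C(unitInterval, B) // p q.1 = q.2 0} :=
  ⟨(g • q.1.1, g • q.1.2), by
    show p (g • q.1.1) = g • q.1.2 0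
    rw [hpe, q.2]⟩

/-- The `G`-action on the subspace `X × {0} ∪ A × I` of `X × I`, for `A` a `G`-invariant
subset of `X` (with `G` acting trivially on `I`). -/
def subSmul {G X : Type*} [Group G] [TopologicalSpace X] [MulAction G X]
    {A : Set X} (hAinv : ∀ (g : G), ∀ a ∈ A, g • a ∈ A) (g : G)
    (z : {z : X × unitInterval // z.2 = 0 ∨ z.1 ∈ A}) :
    {z : X × unitInterval // z.2 = 0 ∨ z.1 ∈ A} :=
  ⟨(g • z.1.1, z.1.2), by
    rcases z.2 with h | h
    · exact Or.inl h
    · exact Or.inr (hAinv g _ h)⟩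

/-- Equivariant Allaud–Fadell lemma: for a regular `G`-fibration `p : E → B` (given by a
regular `G`-lifting function) and a pair `(X,A)` such that `X × {0} ∪ A × I` is an equivariant
strong deformation retract of `X × I` (as for any `G`-ANR pair), any equivariant partial lift
`f` on `X × {0} ∪ A × I` of an equivariant homotopy `h : X × I → B` extends to an equivariant
lift `f̃ : X × I → E` of `h`. -/
theorem equivariant_allaud_fadell
    {G E B X : Type*} [Group G] [TopologicalSpace E] [TopologicalSpace B] [TopologicalSpace X]
    [MulAction G E] [MulAction G B] [MulAction G X]
    [ContinuousConstSMul G E] [ContinuousConstSMul G B] [ContinuousConstSMul G X]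
    (A : Set X) (hAc : IsClosed A) (hAinv : ∀ (g : G), ∀ a ∈ A, g • a ∈ A)
    (p : E → B) (hp : Continuous p) (hpe : ∀ (g : G) (e : E), p (g • e) = g • p e)
    (lam : {q : E × C(unitInterval, B) // p q.1 = q.2 0} → C(unitInterval, E))
    (hlamc : Continuous lam)
    (hlame : ∀ (g : G) (q : {q : E × C(unitInterval, B) // p q.1 = q.2 0}),
      lam (omegaSmul p hpe g q) = g • lam q)
    (hlam0 : ∀ q : {q : E × C(unitInterval, B) // p q.1 = q.2 0}, lam q 0 = q.1.1)
    (hlamp : ∀ (q : {q : E × C(unitInterval, B) // p q.1 = q.2 0}) (t : unitInterval),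
      p (lam q t) = q.1.2 t)
    (hlamreg : ∀ e : E, lam ⟨(e, ContinuousMap.const unitInterval (p e)), rfl⟩ =
      ContinuousMap.const unitInterval e)
    (D : (X × unitInterval) × unitInterval → X × unitInterval) (hDc : Continuous D)
    (hDe : ∀ (g : G) (z : X × unitInterval) (s : unitInterval),
      D ((g • z.1, z.2), s) = (g • (D (z, s)).1, (D (z, s)).2))
    (hD0 : ∀ z : X × unitInterval, D (z, 0) = z)
    (hD1 : ∀ z : X × unitInterval, (D (z, 1)).2 = 0 ∨ (D (z, 1)).1 ∈ A)
    (hDfix : ∀ z : X × unitInterval, (z.2 = 0 ∨ z.1 ∈ A) → ∀ s : unitInterval, D (z, s) = z)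
    (f : {z : X × unitInterval // z.2 = 0 ∨ z.1 ∈ A} → E) (hfc : Continuous f)
    (hfe : ∀ (g : G) (z : {z : X × unitInterval // z.2 = 0 ∨ z.1 ∈ A}),
      f (subSmul hAinv g z) = g • f z)
    (h : X × unitInterval → B) (hhc : Continuous h)
    (hhe : ∀ (g : G) (z : X × unitInterval), h (g • z.1, z.2) = g • h z)
    (hcompat : ∀ z : {z : X × unitInterval // z.2 = 0 ∨ z.1 ∈ A}, p (f z) = h z.1) :
    ∃ ft : X × unitInterval → E,
      Continuous ft ∧
      (∀ (g : G) (z : X × unitInterval), ft (g • z.1, z.2) = g • ft z) ∧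
      (∀ z : {z : X × unitInterval // z.2 = 0 ∨ z.1 ∈ A}, ft z.1 = f z) ∧
      (∀ z : X × unitInterval, p (ft z) = h z) := by
  classical
  -- the path in B obtained by running the deformation backwards
  let W : C((X × unitInterval) × unitInterval, B) :=
    ⟨fun q => h (D (q.1, unitInterval.symm q.2)), by
      apply hhc.comp (hDc.comp _)
      exact continuous_fst.prodMk (unitInterval.continuous_symm.comp continuous_snd)⟩
  let w : C(X × unitInterval, C(unitInterval, B)) := W.curry
  have hw : ∀ (z : X × unitInterval) (s : unitInterval),
      w z s = h (D (z, unitInterval.symm s)) := fun _ _ => rfl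
  -- the retraction onto the subspace
  let r : X × unitInterval → {z : X × unitInterval // z.2 = 0 ∨ z.1 ∈ A} :=
    fun z => ⟨D (z, 1), hD1 z⟩
  have hrc : Continuous r := by
    apply Continuous.subtype_mk
    exact hDc.comp (continuous_id.prodMk continuous_const)
  -- the point of Ω_p associated to z
  let q : X × unitInterval → {q : E × C(unitInterval, B) // p q.1 = q.2 0} :=
    fun z => ⟨(f (r z), w z), by
      show p (f (r z)) = w z 0
      rw [hcompat, hw, unitInterval.symm_zero]⟩
  have hqc : Continuous q := by
    apply Continuous.subtype_mk
    exact (hfc.comp hrc).prodMk w.continuous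
  refine ⟨fun z => lam (q z) 1, ?_, ?_, ?_, ?_⟩
  · exact (continuous_eval_const 1).comp (hlamc.comp hqc)
  · intro g z
    have hq : q (g • z.1, z.2) = omegaSmul p hpe g (q z) := by
      apply Subtype.ext
      apply Prod.ext
      · show f (r (g • z.1, z.2)) = g • f (r z)
        have : r (g • z.1, z.2) = subSmul hAinv g (r z) := by
          apply Subtype.ext
          show D ((g • z.1, z.2), 1) = (g • (D (z, 1)).1, (D (z, 1)).2)
          exact hDe g z 1
        rw [this, hfe]
      · show w (g • z.1, z.2) = g • w z
        ext s
        show h (D ((g • z.1, z.2), unitInterval.symm s)) = g • w z s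
        rw [hDe g z (unitInterval.symm s)]
        have := hhe g (D (z, unitInterval.symm s))
        rw [this]
        rfl
    show lam (q (g • z.1, z.2)) 1 = g • lam (q z) 1
    rw [hq, hlame]
    rfl
  · intro z
    have hr : r z.1 = z := Subtype.ext (hDfix z.1 z.2 1)
    have hwz : w z.1 = ContinuousMap.const unitInterval (p (f z)) := by
      ext s
      rw [hw, hDfix z.1 z.2, hcompat]
      rfl
    have hq : q z.1 = ⟨(f z, ContinuousMap.const unitInterval (p (f z))), rfl⟩ := by
      apply Subtype.ext
      apply Prod.ext
      · show f (r z.1) = f z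
        rw [hr]
      · exact hwz
    show lam (q (↑z)) 1 = f z
    rw [hq, hlamreg]
    rfl
  · intro z
    rw [hlamp]
    show w z 1 = h z
    rw [hw, unitInterval.symm_one, hD0]
end

section
/- Let n ≥ 1, let M be a Hausdorff topological space (in the paper, a topological n-manifold), let A ⊆ M, and let φ : D^n → M be a topological embedding of the closed unit ball D^n ⊆ ℝ^n such that φ(S^{n-1}) ⊆ A and φ(D^n ∖ S^{n-1}) ⊆ M ∖ A. Write c = φ(D^n), ∂c = φ(S^{n-1}) and Int c = φ(D^n ∖ S^{n-1}). Let σ : ∂c → C(I,M) be continuous with σ(x)(0) = x for all x ∈ ∂c, with σ(x)(t) ∈ A for all t ∈ I, and with each path σ(x) either constant or satisfying σ(x)(t) = x only for t = 0. Let o ∈ Int c. Then there exists a continuous σ' : c → C(I,M) such that: σ'(x)(0) = x for all x ∈ c; σ' agrees with σ on ∂c; each path σ'(x) is either constant or satisfies σ'(x)(t) = x only for t = 0; and σ'(x) is non-constant for every x ∈ Int c ∖ {o}. Moreover, if σ(y) is the constant path for some y ∈ ∂c, then σ' can be chosen so that σ'(x) is non-constant for every x ∈ Int c. -/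
/-!
Pull everything back to the closed unit ball through `φ` and choose a centre `p`: a boundary
point where `σ` is constant if there is one, and the preimage of `o` otherwise. Every `x ≠ p` lies
on the segment from `p` to the point where the ray from `p` through `x` leaves the ball. The path
of `x` slides outwards along this ray, at a speed proportional to `‖x - p‖`, and once it reaches
the sphere it follows the path `σ` prescribed there; on the sphere itself this is just `σ`.
Continuity at `p` holds because nearby points only reach the sphere close to `p`, which is
impossible for an interior centre and harmless for a boundary centre, where `σ` is constant. An
interior point never comes back: along the ray `φ` is injective, and afterwards the path stays in
`A`, which misses the interior of the cell.
-/

open Set Metric Topology Filter RealInnerProductSpace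

section ExitTime

variable {E : Type*} [NormedAddCommGroup E] [InnerProductSpace ℝ E] {p v x : E} {l : ℝ}

/-- For `‖p‖ ≤ 1` and `v ≠ 0`, the larger root of `l ↦ ‖p + l • v‖ ^ 2 - 1`: the ray from `p`
in direction `v` leaves the closed unit ball at `p + exitTime p v • v`. -/
noncomputable def exitTime (p v : E) : ℝ :=
  (√(⟪p, v⟫ ^ 2 + ‖v‖ ^ 2 * (1 - ‖p‖ ^ 2)) - ⟪p, v⟫) / ‖v‖ ^ 2

theorem continuousOn_exitTime : ContinuousOn (exitTime p) {0}ᶜ := fun v hv =>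
  (ContinuousAt.div (by fun_prop) (by fun_prop) (by simpa using hv)).continuousWithinAt

theorem norm_add_smul_sq_sub_one (hp : ‖p‖ ≤ 1) (hv : v ≠ 0) (l : ℝ) :
    ‖p + l • v‖ ^ 2 - 1 =
      (l - exitTime p v) * (‖v‖ ^ 2 * l + ⟪p, v⟫ + √(⟪p, v⟫ ^ 2 + ‖v‖ ^ 2 * (1 - ‖p‖ ^ 2))) := by
  have hΔ := Real.sq_sqrt (x := ⟪p, v⟫ ^ 2 + ‖v‖ ^ 2 * (1 - ‖p‖ ^ 2))
    (by have : ‖p‖ ^ 2 ≤ 1 := pow_le_one₀ (norm_nonneg p) hp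
        positivity)
  have : ‖v‖ ^ 2 ≠ 0 := by positivity
  rw [norm_add_sq_real, real_inner_smul_right, norm_smul, Real.norm_eq_abs, mul_pow, sq_abs,
    exitTime]
  field_simp
  linear_combination hΔ

theorem exitTime_cofactor_pos (hp : ‖p‖ ≤ 1) (hv : v ≠ 0) (hl : 0 < l) :
    0 < ‖v‖ ^ 2 * l + ⟪p, v⟫ + √(⟪p, v⟫ ^ 2 + ‖v‖ ^ 2 * (1 - ‖p‖ ^ 2)) := by
  have : |⟪p, v⟫| ≤ √(⟪p, v⟫ ^ 2 + ‖v‖ ^ 2 * (1 - ‖p‖ ^ 2)) := by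
    rw [← Real.sqrt_sq_eq_abs]
    exact Real.sqrt_le_sqrt (le_add_of_nonneg_right (mul_nonneg (sq_nonneg _)
      (sub_nonneg.2 (pow_le_one₀ (norm_nonneg p) hp))))
  have : 0 < ‖v‖ ^ 2 * l := by positivity
  linarith [neg_abs_le ⟪p, v⟫]

theorem norm_add_smul_le_one_iff (hp : ‖p‖ ≤ 1) (hv : v ≠ 0) (hl : 0 < l) :
    ‖p + l • v‖ ≤ 1 ↔ l ≤ exitTime p v := by
  have := exitTime_cofactor_pos hp hv hl
  rw [← sq_le_one_iff₀ (norm_nonneg _), ← sub_nonpos, norm_add_smul_sq_sub_one hp hv]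
  constructor <;> intro h <;> nlinarith

theorem norm_add_smul_lt_one_iff (hp : ‖p‖ ≤ 1) (hv : v ≠ 0) (hl : 0 < l) :
    ‖p + l • v‖ < 1 ↔ l < exitTime p v := by
  have := exitTime_cofactor_pos hp hv hl
  rw [← sq_lt_one_iff₀ (norm_nonneg _), ← sub_neg, norm_add_smul_sq_sub_one hp hv]
  constructor <;> intro h <;> nlinarith

theorem norm_add_exitTime_smul (hp : ‖p‖ ≤ 1) (hv : v ≠ 0) : ‖p + exitTime p v • v‖ = 1 := by
  have h := norm_add_smul_sq_sub_one hp hv (exitTime p v)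
  rw [sub_self, zero_mul, sub_eq_zero] at h
  exact (pow_eq_one_iff_of_nonneg (norm_nonneg _) two_ne_zero).1 h

theorem one_le_exitTime (hp : p ∈ closedBall (0 : E) 1) (hx : x ∈ closedBall (0 : E) 1)
    (hxp : x ≠ p) : 1 ≤ exitTime p (x - p) :=
  (norm_add_smul_le_one_iff (mem_closedBall_zero_iff.1 hp) (sub_ne_zero.2 hxp) one_pos).1
    (by simpa using hx)

theorem exitTime_eq_one (hp : p ∈ closedBall (0 : E) 1) (hx : ‖x‖ = 1) (hxp : x ≠ p) :
    exitTime p (x - p) = 1 := by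
  refine le_antisymm (not_lt.1 fun h => ?_) (one_le_exitTime hp (by simp [hx]) hxp)
  have := (norm_add_smul_lt_one_iff (mem_closedBall_zero_iff.1 hp) (sub_ne_zero.2 hxp)
    one_pos).2 h
  simp [hx] at this

end ExitTime

abbrev sphereInClosedBall (E : Type*) [NormedAddCommGroup E] : Set (closedBall (0 : E) 1) :=
  {x | ‖(x : E)‖ = 1}

section PathFields

variable {E : Type*} [NormedAddCommGroup E] {X : Type*} [TopologicalSpace X]

open unitInterval

section RayPath

variable {f : closedBall (0 : E) 1 → X} {g : sphereInClosedBall E → C(I, X)}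
  {p : closedBall (0 : E) 1}

/-- Either `p` is on the sphere and `g p` is the constant path at `f p`, or no point of the sphere
is within `1 - ‖p‖` of `p`. -/
theorem exists_pos_forall_apply_mem_of_norm_sub_lt (hg : Continuous g)
    (hgp : ∀ z : sphereInClosedBall E, (z : closedBall (0 : E) 1) = p → ∀ t, g z t = f p)
    {V : Set X} (hV : V ∈ 𝓝 (f p)) :
    ∃ δ > 0, ∀ z : sphereInClosedBall E, ‖(z : E) - p‖ < δ → ∀ t, g z t ∈ V := by
  rcases (mem_closedBall_zero_iff.1 p.2).lt_or_eq with hp | hp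
  · refine ⟨1 - ‖(p : E)‖, sub_pos.2 hp, fun z hz => absurd hz (not_lt.2 ?_)⟩
    simpa [z.2.out] using norm_sub_norm_le (z : E) p
  · obtain ⟨U, hUV, hU, hpU⟩ := mem_nhds_iff.1 hV
    let z₀ : sphereInClosedBall E := ⟨p, hp⟩
    have hz₀ : g z₀ ∈ {γ : C(I, X) | MapsTo γ univ U} := fun t _ => hgp z₀ rfl t ▸ hpU
    obtain ⟨δ, hδ, hball⟩ := Metric.mem_nhds_iff.1 <| hg.continuousAt.preimage_mem_nhds <|
      (ContinuousMap.isOpen_setOfPred_mapsTo isCompact_univ hU).mem_nhds hz₀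
    refine ⟨δ, hδ, fun z hz t => hUV (hball ?_ (mem_univ t))⟩
    simpa [Subtype.dist_eq, dist_eq_norm, z₀] using hz

variable [NormedSpace ℝ E] (f g p)

/-- The path that runs from `p` along the segment to `z`, reaching it at `l = 1`, and then
follows `g z`. -/
noncomputable def rayPath (z : sphereInClosedBall E) (l : ℝ) : X :=
  if l ≤ 1 then
    f ⟨p + (projIcc 0 1 zero_le_one l : ℝ) • ((z : E) - p),
      (convex_closedBall 0 1).add_smul_sub_mem p.2 z.1.2 (projIcc 0 1 zero_le_one l).2⟩
  else g z (projIcc 0 1 zero_le_one (l - 1))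

variable {f g p}

theorem continuous_rayPath (hf : Continuous f) (hg : Continuous g) (hg0 : ∀ z, g z 0 = f z) :
    Continuous fun q : sphereInClosedBall E × ℝ => rayPath f g p q.1 q.2 := by
  refine Continuous.if_le (hf.comp (by fun_prop)) ?_ continuous_snd continuous_const ?_
  · exact continuous_eval.comp ((hg.comp continuous_fst).prodMk
      ((continuous_projIcc (h := zero_le_one)).comp (by fun_prop)))
  · rintro ⟨z, l⟩ (rfl : l = 1)
    simp [hg0]

theorem rayPath_of_mem_Icc {z : sphereInClosedBall E} {l : ℝ} (hl : l ∈ Icc (0 : ℝ) 1) :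
    rayPath f g p z l =
      f ⟨p + l • ((z : E) - p), (convex_closedBall 0 1).add_smul_sub_mem p.2 z.1.2 hl⟩ := by
  simp [rayPath, hl.2, projIcc_of_mem _ hl]

theorem rayPath_of_one_lt {z : sphereInClosedBall E} {l : ℝ} (hl : 1 < l) :
    rayPath f g p z l = g z (projIcc 0 1 zero_le_one (l - 1)) :=
  if_neg hl.not_ge

theorem exists_pos_forall_rayPath_mem (hf : Continuous f) (hg : Continuous g)
    (hgp : ∀ z : sphereInClosedBall E, (z : closedBall (0 : E) 1) = p → ∀ t, g z t = f p)
    {V : Set X} (hV : V ∈ 𝓝 (f p)) :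
    ∃ δ > 0, ∀ (z : sphereInClosedBall E) (l : ℝ), 0 ≤ l → l * ‖(z : E) - p‖ < δ →
      rayPath f g p z l ∈ V := by
  obtain ⟨δ₁, hδ₁, hg₁⟩ := exists_pos_forall_apply_mem_of_norm_sub_lt hg hgp hV
  obtain ⟨δ₂, hδ₂, hf₂⟩ := Metric.mem_nhds_iff.1 (hf.continuousAt hV)
  refine ⟨min δ₁ δ₂, lt_min hδ₁ hδ₂, fun z l hl0 hl => ?_⟩
  rcases le_or_gt l 1 with hl1 | hl1
  · rw [rayPath_of_mem_Icc ⟨hl0, hl1⟩]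
    refine hf₂ ?_
    rw [mem_ball, Subtype.dist_eq, dist_eq_norm]
    simpa [norm_smul, abs_of_nonneg hl0] using hl.trans_le (min_le_right _ _)
  · rw [rayPath_of_one_lt hl1]
    refine hg₁ z ?_ _
    nlinarith [min_le_left δ₁ δ₂, norm_nonneg ((z : E) - p)]

end RayPath

section RadialPathField

variable [InnerProductSpace ℝ E] (f : closedBall (0 : E) 1 → X) (g : sphereInClosedBall E → C(I, X))
  (p : closedBall (0 : E) 1)

noncomputable def exitPoint (x : closedBall (0 : E) 1) (hx : x ≠ p) : sphereInClosedBall E :=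
  have h := norm_add_exitTime_smul (mem_closedBall_zero_iff.1 p.2)
    (sub_ne_zero.2 (Subtype.coe_ne_coe.2 hx))
  ⟨⟨p + exitTime (p : E) (x - p) • ((x : E) - p), mem_closedBall_zero_iff.2 h.le⟩, h⟩

open Classical in
/-- The point `x ≠ p` sits at parameter `1 / exitTime p (x - p)` of `rayPath` towards its exit
point; at time `t` it has moved on to parameter `(1 + t) / exitTime p (x - p)`. -/
noncomputable def radialPathField (q : closedBall (0 : E) 1 × I) : X :=
  if h : q.1 = p then f p
  else rayPath f g p (exitPoint p q.1 h) ((1 + q.2) / exitTime (p : E) (q.1 - p))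

variable {f g p}

theorem coe_exitPoint_sub {x : closedBall (0 : E) 1} (hx : x ≠ p) :
    ((exitPoint p x hx : closedBall (0 : E) 1) : E) - p =
      exitTime (p : E) (x - p) • ((x : E) - p) :=
  add_sub_cancel_left _ _

theorem radialPathField_center (t : I) : radialPathField f g p (p, t) = f p := dif_pos rfl

theorem radialPathField_of_ne {x : closedBall (0 : E) 1} (hx : x ≠ p) (t : I) :
    radialPathField f g p (x, t) =
      rayPath f g p (exitPoint p x hx) ((1 + t) / exitTime (p : E) (x - p)) :=
  dif_neg hx

theorem exists_radialPathField_eq {x : closedBall (0 : E) 1} (hx : x ≠ p) {t : I}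
    (ht : 1 + (t : ℝ) ≤ exitTime (p : E) (x - p)) :
    ∃ y : closedBall (0 : E) 1, (y : E) = p + (1 + (t : ℝ)) • ((x : E) - p) ∧
      radialPathField f g p (x, t) = f y := by
  have hT := zero_lt_one.trans_le (one_le_exitTime p.2 x.2 (Subtype.coe_ne_coe.2 hx))
  have hl : (1 + (t : ℝ)) / exitTime (p : E) (x - p) ∈ Icc (0 : ℝ) 1 :=
    ⟨div_nonneg (add_nonneg zero_le_one t.2.1) hT.le, (div_le_one hT).2 ht⟩
  refine ⟨_, ?_, (radialPathField_of_ne hx t).trans (rayPath_of_mem_Icc hl)⟩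
  simp only [coe_exitPoint_sub, smul_smul, div_mul_cancel₀ _ hT.ne']

theorem radialPathField_zero (x : closedBall (0 : E) 1) : radialPathField f g p (x, 0) = f x := by
  rcases eq_or_ne x p with rfl | hx
  · exact radialPathField_center (g := g) 0
  · obtain ⟨y, hy, hfy⟩ := exists_radialPathField_eq (g := g) hx (t := 0)
      (by simpa using one_le_exitTime p.2 x.2 (Subtype.coe_ne_coe.2 hx))
    rw [hfy, show y = x from Subtype.ext (by simpa using hy)]

theorem radialPathField_of_norm_eq_one (hg0 : ∀ z, g z 0 = f z)
    (hgp : ∀ z : sphereInClosedBall E, (z : closedBall (0 : E) 1) = p → ∀ t, g z t = f p)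
    (z : sphereInClosedBall E) (t : I) :
    radialPathField f g p (z, t) = g z t := by
  rcases eq_or_ne (z : closedBall (0 : E) 1) p with hz | hz
  · rw [hgp z hz t, hz, radialPathField_center]
  · have hT : exitTime (p : E) (z - p) = 1 := exitTime_eq_one p.2 z.2 (Subtype.coe_ne_coe.2 hz)
    have hzr : exitPoint p z hz = z := Subtype.ext (Subtype.ext (by simp [exitPoint, hT]))
    rw [radialPathField_of_ne hz, hzr, hT, div_one]
    rcases t.2.1.eq_or_lt with ht | ht
    · obtain rfl : t = 0 := Subtype.ext ht.symm
      rw [hg0, rayPath_of_mem_Icc (by simp)]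
      simp
    · rw [rayPath_of_one_lt (by linarith), add_sub_cancel_left, projIcc_val]

theorem eq_zero_of_radialPathField_eq (hf : Function.Injective f)
    (hgf : ∀ z τ (x : closedBall (0 : E) 1), ‖(x : E)‖ < 1 → g z τ ≠ f x)
    {x : closedBall (0 : E) 1} (hx : ‖(x : E)‖ < 1) (hxp : x ≠ p) {t : I}
    (h : radialPathField f g p (x, t) = f x) : t = 0 := by
  by_cases ht : 1 + (t : ℝ) ≤ exitTime (p : E) (x - p)
  · obtain ⟨y, hy, hfy⟩ := exists_radialPathField_eq (g := g) hxp ht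
    rw [congrArg Subtype.val (hf (hfy.symm.trans h))] at hy
    have : (t : ℝ) • ((x : E) - p) = 0 := by linear_combination (norm := module) -hy
    exact Subtype.ext ((smul_eq_zero.1 this).resolve_right
      (sub_ne_zero.2 (Subtype.coe_ne_coe.2 hxp)))
  · have hT := one_le_exitTime p.2 x.2 (Subtype.coe_ne_coe.2 hxp)
    rw [radialPathField_of_ne (g := g) hxp,
      rayPath_of_one_lt ((one_lt_div (by linarith)).2 (not_le.1 ht))] at h
    exact (hgf _ _ _ hx h).elim

theorem continuousOn_radialPathField (hf : Continuous f) (hg : Continuous g)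
    (hg0 : ∀ z, g z 0 = f z) : ContinuousOn (radialPathField f g p) {q | q.1 ≠ p} := by
  rw [continuousOn_iff_continuous_domRestrict]
  have hT : Continuous fun q : {q : closedBall (0 : E) 1 × I | q.1 ≠ p} =>
      exitTime (p : E) (q.1.1 - p) :=
    continuousOn_exitTime.comp_continuous (by fun_prop)
      fun q => sub_ne_zero.2 (Subtype.coe_ne_coe.2 q.2)
  have hres : domRestrict {q | q.1 ≠ p} (radialPathField f g p) = fun q =>
      rayPath f g p (exitPoint p q.1.1 q.2) ((1 + q.1.2) / exitTime (p : E) (q.1.1 - p)) :=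
    funext fun q => radialPathField_of_ne q.2 q.1.2
  rw [hres]
  refine (continuous_rayPath hf hg hg0).comp (.prodMk (.subtype_mk (.subtype_mk ?_ _) _)
    (.div (by fun_prop) hT fun q => ?_))
  · exact continuous_const.add (hT.smul (by fun_prop))
  · exact (zero_lt_one.trans_le (one_le_exitTime p.2 q.1.1.2 (Subtype.coe_ne_coe.2 q.2))).ne'

theorem continuousAt_radialPathField_center (hf : Continuous f) (hg : Continuous g)
    (hgp : ∀ z : sphereInClosedBall E, (z : closedBall (0 : E) 1) = p → ∀ t, g z t = f p) (t : I) :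
    ContinuousAt (radialPathField f g p) (p, t) := by
  intro V hV
  rw [radialPathField_center] at hV
  obtain ⟨δ, hδ, hmem⟩ := exists_pos_forall_rayPath_mem hf hg hgp hV
  refine mem_map.2 (mem_of_superset (prod_mem_nhds (ball_mem_nhds p (half_pos hδ)) univ_mem) ?_)
  rintro ⟨x, s⟩ ⟨hx, -⟩
  rcases eq_or_ne x p with rfl | hxp
  · simpa [radialPathField_center] using mem_of_mem_nhds hV
  · have hT := one_le_exitTime p.2 x.2 (Subtype.coe_ne_coe.2 hxp)
    rw [mem_ball, Subtype.dist_eq, dist_eq_norm] at hx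
    rw [mem_preimage, radialPathField_of_ne hxp]
    refine hmem _ _ (div_nonneg (add_nonneg zero_le_one s.2.1) (by linarith)) ?_
    rw [coe_exitPoint_sub, norm_smul, Real.norm_of_nonneg (by linarith), ← mul_assoc,
      div_mul_cancel₀ _ (by linarith)]
    nlinarith [s.2.2, norm_nonneg ((x : E) - p)]

theorem continuous_radialPathField (hf : Continuous f) (hg : Continuous g)
    (hg0 : ∀ z, g z 0 = f z)
    (hgp : ∀ z : sphereInClosedBall E, (z : closedBall (0 : E) 1) = p → ∀ t, g z t = f p) :
    Continuous (radialPathField f g p) := by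
  refine continuous_iff_continuousAt.2 fun ⟨x, t⟩ => ?_
  rcases eq_or_ne x p with rfl | hxp
  · exact continuousAt_radialPathField_center hf hg hgp t
  · exact (continuousOn_radialPathField hf hg hg0).continuousAt
      ((isOpen_ne_fun continuous_fst continuous_const).mem_nhds hxp)

end RadialPathField

end PathFields

theorem exists_pathField_extension_of_center {E : Type*} [NormedAddCommGroup E]
    [InnerProductSpace ℝ E] {M : Type*} [TopologicalSpace M] {A : Set M}
    {φ : closedBall (0 : E) 1 → M} (hφ : Topology.IsEmbedding φ)
    (hint : ∀ x : closedBall (0 : E) 1, ‖(x : E)‖ < 1 → φ x ∉ A)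
    {σ : (φ '' {x | ‖(x : E)‖ = 1}) → C(unitInterval, M)} (hσc : Continuous σ)
    (hσ0 : ∀ y, σ y 0 = (y : M)) (hσA : ∀ y t, σ y t ∈ A)
    (hσnash : ∀ y, (∀ t, σ y t = (y : M)) ∨ (∀ t, σ y t = (y : M) → t = 0))
    (p : closedBall (0 : E) 1)
    (hp : ∀ y : φ '' {x | ‖(x : E)‖ = 1}, (y : M) = φ p → ∀ t, σ y t = y) :
    ∃ σ' : range φ → C(unitInterval, M), Continuous σ' ∧ (∀ y, σ' y 0 = (y : M)) ∧
      (∀ (y : M) (hy : y ∈ φ '' {x | ‖(x : E)‖ = 1}) (hy' : y ∈ range φ),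
        σ' ⟨y, hy'⟩ = σ ⟨y, hy⟩) ∧
      (∀ y, (∀ t, σ' y t = (y : M)) ∨ (∀ t, σ' y t = (y : M) → t = 0)) ∧
      (∀ y : range φ, (y : M) ∈ φ '' {x | ‖(x : E)‖ < 1} → (y : M) ≠ φ p →
        ∃ t, σ' y t ≠ (y : M)) := by
  set e := hφ.toHomeomorph
  have he : ∀ x, (e x : M) = φ x := hφ.toHomeomorph_apply_coe
  set g := σ ∘ imageFactorization φ {x | ‖(x : E)‖ = 1}
  have hg : Continuous g := hσc.comp ((hφ.continuous.comp continuous_subtype_val).subtype_mk _)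
  have hg0 : ∀ z, g z 0 = φ z := fun z => hσ0 _
  have hgp : ∀ z : sphereInClosedBall E, (z : closedBall (0 : E) 1) = p →
      ∀ t, g z t = φ p := fun z hz t =>
    (hp (imageFactorization φ _ z) (congrArg φ hz) t).trans (congrArg φ hz)
  have hgf : ∀ z τ (x : closedBall (0 : E) 1), ‖(x : E)‖ < 1 → g z τ ≠ φ x :=
    fun z τ x hx h => hint x hx (h ▸ hσA _ τ)
  let F : C(closedBall (0 : E) 1 × unitInterval, M) :=
    ⟨radialPathField φ g p, continuous_radialPathField hφ.continuous hg hg0 hgp⟩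
  have hF : ∀ x t, F.curry (e.symm (e x)) t = radialPathField φ g p (x, t) := fun x t => by
    rw [e.symm_apply_apply]; rfl
  refine ⟨fun y => F.curry (e.symm y), by fun_prop, e.surjective.forall.2 fun x => ?_, ?_,
    e.surjective.forall.2 fun x => ?_, e.surjective.forall.2 fun x hx hxp => ⟨1, ?_⟩⟩
  · rw [hF, he]
    exact radialPathField_zero x
  · rintro _ ⟨x, hx, rfl⟩ hy'
    rw [show (⟨φ x, hy'⟩ : range φ) = e x from Subtype.ext (he x).symm]
    ext t
    rw [hF]
    exact radialPathField_of_norm_eq_one hg0 hgp ⟨x, hx⟩ t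
  · rw [he]
    simp only [hF]
    rcases eq_or_ne x p with rfl | hxp
    · exact .inl radialPathField_center
    rcases (mem_closedBall_zero_iff.1 x.2).lt_or_eq with hx | hx
    · exact .inr fun t => eq_zero_of_radialPathField_eq hφ.injective hgf hx hxp
    · simp only [radialPathField_of_norm_eq_one hg0 hgp ⟨x, hx⟩]
      exact hσnash _
  · rw [he] at hx hxp ⊢
    rw [hF]
    obtain ⟨x', hx', hx'x⟩ := hx
    obtain rfl := hφ.injective hx'x
    exact fun h => one_ne_zero (eq_zero_of_radialPathField_eq hφ.injective hgf hx'
      (ne_of_apply_ne φ hxp) h)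

theorem path_field_extension_over_cell_general
    {n : ℕ} {M : Type*} [TopologicalSpace M] (A : Set M)
    (φ : (Metric.closedBall (0 : EuclideanSpace ℝ (Fin n)) 1) → M)
    (hφ : Topology.IsEmbedding φ)
    (hint : ∀ x : (Metric.closedBall (0 : EuclideanSpace ℝ (Fin n)) 1),
      ‖(x : EuclideanSpace ℝ (Fin n))‖ < 1 → φ x ∉ A)
    (σ : (φ '' {x | ‖(x : EuclideanSpace ℝ (Fin n))‖ = 1}) → C(unitInterval, M))
    (hσc : Continuous σ)
    (hσ0 : ∀ y, σ y 0 = (y : M))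
    (hσA : ∀ (y) (t : unitInterval), σ y t ∈ A)
    (hσnash : ∀ y, (∀ t : unitInterval, σ y t = (y : M)) ∨
      (∀ t : unitInterval, σ y t = (y : M) → t = 0))
    (o : M) (ho : o ∈ φ '' {x | ‖(x : EuclideanSpace ℝ (Fin n))‖ < 1}) :
    ∃ σ' : (Set.range φ) → C(unitInterval, M),
      Continuous σ' ∧
      (∀ y, σ' y 0 = (y : M)) ∧
      (∀ (y : M) (hy : y ∈ φ '' {x | ‖(x : EuclideanSpace ℝ (Fin n))‖ = 1})
        (hy' : y ∈ Set.range φ), σ' ⟨y, hy'⟩ = σ ⟨y, hy⟩) ∧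
      (∀ y, (∀ t : unitInterval, σ' y t = (y : M)) ∨
        (∀ t : unitInterval, σ' y t = (y : M) → t = 0)) ∧
      (∀ y : (Set.range φ), (y : M) ∈ φ '' {x | ‖(x : EuclideanSpace ℝ (Fin n))‖ < 1} →
        (y : M) ≠ o → ∃ t : unitInterval, σ' y t ≠ (y : M)) ∧
      ((∃ y₀, ∀ t : unitInterval, σ y₀ t = (y₀ : M)) →
        ∀ y : (Set.range φ), (y : M) ∈ φ '' {x | ‖(x : EuclideanSpace ℝ (Fin n))‖ < 1} →
          ∃ t : unitInterval, σ' y t ≠ (y : M)) := by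
  obtain ⟨a, ha, rfl⟩ := ho
  by_cases hsing : ∃ y₀, ∀ t : unitInterval, σ y₀ t = (y₀ : M)
  · obtain ⟨⟨_, x₀, hx₀, rfl⟩, hy₀⟩ := hsing
    obtain ⟨σ', hc, h0, hbd, hnash, hmove⟩ :=
      exists_pathField_extension_of_center hφ hint hσc hσ0 hσA hσnash x₀ fun y hy => by
        obtain rfl : y = ⟨φ x₀, x₀, hx₀, rfl⟩ := Subtype.ext hy
        exact hy₀
    have hne : ∀ y : range φ, (y : M) ∈ φ '' {x | ‖(x : EuclideanSpace ℝ (Fin n))‖ < 1} →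
        (y : M) ≠ φ x₀ := by
      rintro y ⟨x, hx, hxy⟩ h
      exact hx.ne (hφ.injective (hxy.trans h) ▸ hx₀)
    exact ⟨σ', hc, h0, hbd, hnash, fun y hy _ => hmove y hy (hne y hy),
      fun _ y hy => hmove y hy (hne y hy)⟩
  · obtain ⟨σ', hc, h0, hbd, hnash, hmove⟩ :=
      exists_pathField_extension_of_center hφ hint hσc hσ0 hσA hσnash a
        fun ⟨_, x, hx, rfl⟩ h => absurd (hφ.injective h ▸ hx) ha.ne
    exact ⟨σ', hc, h0, hbd, hnash, hmove, fun h => absurd h hsing⟩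

/-- Extension of a path field over an `n`-cell (Lemma 3.3 of the paper): given a topological
embedding `φ` of the closed unit ball `Dⁿ` into a Hausdorff space `M` with `φ(Sⁿ⁻¹) ⊆ A` and
`φ(Dⁿ∖Sⁿ⁻¹) ⊆ M∖A`, a Nash path field `σ` on `∂c = φ(Sⁿ⁻¹)` with values in `A` extends over
`c = φ(Dⁿ)` to a Nash path field `σ'` whose only possible interior singularity is the
prescribed point `o ∈ Int c`; moreover, if `σ` has a singularity on `∂c`, then `σ'` can be
chosen with no interior singularity at all. -/
theorem path_field_extension_over_cell
    {n : ℕ} (hn : 1 ≤ n) {M : Type*} [TopologicalSpace M] [T2Space M] (A : Set M)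
    (φ : (Metric.closedBall (0 : EuclideanSpace ℝ (Fin n)) 1) → M)
    (hφ : Topology.IsEmbedding φ)
    (hbd : ∀ x : (Metric.closedBall (0 : EuclideanSpace ℝ (Fin n)) 1),
      ‖(x : EuclideanSpace ℝ (Fin n))‖ = 1 → φ x ∈ A)
    (hint : ∀ x : (Metric.closedBall (0 : EuclideanSpace ℝ (Fin n)) 1),
      ‖(x : EuclideanSpace ℝ (Fin n))‖ < 1 → φ x ∉ A)
    (σ : (φ '' {x | ‖(x : EuclideanSpace ℝ (Fin n))‖ = 1}) → C(unitInterval, M))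
    (hσc : Continuous σ)
    (hσ0 : ∀ y, σ y 0 = (y : M))
    (hσA : ∀ (y) (t : unitInterval), σ y t ∈ A)
    (hσnash : ∀ y, (∀ t : unitInterval, σ y t = (y : M)) ∨
      (∀ t : unitInterval, σ y t = (y : M) → t = 0))
    (o : M) (ho : o ∈ φ '' {x | ‖(x : EuclideanSpace ℝ (Fin n))‖ < 1}) :
    ∃ σ' : (Set.range φ) → C(unitInterval, M),
      Continuous σ' ∧
      (∀ y, σ' y 0 = (y : M)) ∧
      (∀ (y : M) (hy : y ∈ φ '' {x | ‖(x : EuclideanSpace ℝ (Fin n))‖ = 1})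
        (hy' : y ∈ Set.range φ), σ' ⟨y, hy'⟩ = σ ⟨y, hy⟩) ∧
      (∀ y, (∀ t : unitInterval, σ' y t = (y : M)) ∨
        (∀ t : unitInterval, σ' y t = (y : M) → t = 0)) ∧
      (∀ y : (Set.range φ), (y : M) ∈ φ '' {x | ‖(x : EuclideanSpace ℝ (Fin n))‖ < 1} →
        (y : M) ≠ o → ∃ t : unitInterval, σ' y t ≠ (y : M)) ∧
      ((∃ y₀, ∀ t : unitInterval, σ y₀ t = (y₀ : M)) →
        ∀ y : (Set.range φ), (y : M) ∈ φ '' {x | ‖(x : EuclideanSpace ℝ (Fin n))‖ < 1} →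
          ∃ t : unitInterval, σ' y t ≠ (y : M)) :=
  path_field_extension_over_cell_general A φ hφ hint σ hσc hσ0 hσA hσnash o ho
end

section
/- Let G be a finite group, let M be a metric space whose metric d is G-invariant (d(g·x, g·y) = d(x,y) for all g ∈ G, x, y ∈ M) and on which G acts continuously, and let A ⊆ M be a nonempty closed G-invariant subset. Suppose σ : M → C(I,M) is an equivariant continuous path field (σ(x)(0) = x for all x) such that σ(x)(t) ≠ x for every x ∉ A and every t ∈ (0,1]. Then the map φ : M → M defined by φ(x) = σ(x)(min(d(x,A),1)) is continuous and equivariant, satisfies Fix φ = {x ∈ M : φ(x) = x} = A, and is G-homotopic to the identity map of M via the equivariant homotopy H(x,s) = σ(x)(s · min(d(x,A),1)). -/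
/-- The distance to `A`, clamped to `1`, as an element of the unit interval. -/
noncomputable def clampedDist {M : Type*} [MetricSpace M] (x : M) (A : Set M) : unitInterval :=
  ⟨min (Metric.infDist x A) 1, ⟨le_min Metric.infDist_nonneg zero_le_one, min_le_right _ _⟩⟩

section ClampedDist

variable {M : Type*} [MetricSpace M]

lemma continuous_clampedDist (A : Set M) : Continuous fun x : M => clampedDist x A :=
  ((Metric.continuous_infDist_pt A).min continuous_const).subtype_mk _

lemma clampedDist_eq_zero_iff {A : Set M} (hA : A.Nonempty) (hAc : IsClosed A) (x : M) :
    clampedDist x A = 0 ↔ x ∈ A := by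
  rw [hAc.mem_iff_infDist_zero hA, ← Subtype.val_inj]
  have := Metric.infDist_nonneg (x := x) (s := A)
  simp only [clampedDist, Set.Icc.coe_zero]
  grind

lemma clampedDist_image_of_isometry {Φ : M → M} (hΦ : Isometry Φ) (A : Set M) (x : M) :
    clampedDist (Φ x) (Φ '' A) = clampedDist x A := by
  simp only [clampedDist, Metric.infDist_image hΦ]

lemma clampedDist_smul {G : Type*} [Group G] [MulAction G M]
    (hd : ∀ (g : G) (x y : M), dist (g • x) (g • y) = dist x y)
    {A : Set M} (hAinv : ∀ (g : G), ∀ a ∈ A, g • a ∈ A) (g : G) (x : M) :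
    clampedDist (g • x) A = clampedDist x A := by
  have hgA : (g • ·) '' A = A :=
    (Set.image_subset_iff.2 fun a ha => hAinv g a ha).antisymm
      fun a ha => ⟨g⁻¹ • a, hAinv g⁻¹ a ha, smul_inv_smul g a⟩
  simpa only [hgA] using clampedDist_image_of_isometry (Isometry.of_dist_eq (hd g)) A x

end ClampedDist

lemma setOf_eval_eq_self_of_pathField {X : Type*} [TopologicalSpace X]
    {σ : X → C(unitInterval, X)} (hσ0 : ∀ x : X, σ x 0 = x) {A : Set X}
    (hns : ∀ x : X, x ∉ A → ∀ t : unitInterval, t ≠ 0 → σ x t ≠ x)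
    {τ : X → unitInterval} (hτ : ∀ x, τ x = 0 ↔ x ∈ A) :
    {x | σ x (τ x) = x} = A := by
  ext x
  refine ⟨fun hfix => by_contra fun hx => hns x hx _ ((hτ x).not.2 hx) hfix, fun hx => ?_⟩
  show σ x (τ x) = x
  rw [(hτ x).2 hx, hσ0]

theorem g_deformation_with_prescribed_fixed_point_set_general
    {G M : Type*} [Group G] [MetricSpace M] [MulAction G M]
    (hd : ∀ (g : G) (x y : M), dist (g • x) (g • y) = dist x y)
    (A : Set M) (hA : A.Nonempty) (hAc : IsClosed A)
    (hAinv : ∀ (g : G), ∀ a ∈ A, g • a ∈ A)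
    (σ : M → C(unitInterval, M)) (hσc : Continuous σ)
    (hσe : ∀ (g : G) (x : M) (t : unitInterval), σ (g • x) t = g • σ x t)
    (hσ0 : ∀ x : M, σ x 0 = x)
    (hns : ∀ x : M, x ∉ A → ∀ t : unitInterval, t ≠ 0 → σ x t ≠ x) :
    (Continuous fun x : M => σ x (clampedDist x A)) ∧
    (∀ (g : G) (x : M), σ (g • x) (clampedDist (g • x) A) = g • σ x (clampedDist x A)) ∧
    ({x : M | σ x (clampedDist x A) = x} = A) ∧
    (Continuous fun z : M × unitInterval => σ z.1 (z.2 * clampedDist z.1 A)) ∧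
    (∀ (g : G) (x : M) (s : unitInterval),
      σ (g • x) (s * clampedDist (g • x) A) = g • σ x (s * clampedDist x A)) ∧
    (∀ x : M, σ x ((0 : unitInterval) * clampedDist x A) = x) ∧
    (∀ x : M, σ x ((1 : unitInterval) * clampedDist x A) = σ x (clampedDist x A)) := by
  have hdist := continuous_clampedDist A
  refine ⟨hσc.eval hdist, fun g x => ?_,
    setOf_eval_eq_self_of_pathField hσ0 hns (clampedDist_eq_zero_iff hA hAc),
    (hσc.comp continuous_fst).eval (continuous_snd.mul (hdist.comp continuous_fst)),
    fun g x s => ?_, fun x => by rw [zero_mul, hσ0], fun x => by rw [one_mul]⟩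
  all_goals rw [clampedDist_smul hd hAinv, hσe]

/-- Given an equivariant path field `σ` on a metric `G`-space with invariant metric, whose paths
leave their starting point immediately outside the closed invariant set `A`, the map
`φ(x) = σ(x)(min(d(x,A),1))` is a continuous equivariant map with fixed point set exactly `A`,
`G`-homotopic to the identity via `H(x,s) = σ(x)(s·min(d(x,A),1))`. -/
theorem g_deformation_with_prescribed_fixed_point_set
    {G M : Type*} [Group G] [Finite G] [MetricSpace M] [MulAction G M]
    [ContinuousConstSMul G M]
    (hd : ∀ (g : G) (x y : M), dist (g • x) (g • y) = dist x y)
    (A : Set M) (hA : A.Nonempty) (hAc : IsClosed A)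
    (hAinv : ∀ (g : G), ∀ a ∈ A, g • a ∈ A)
    (σ : M → C(unitInterval, M)) (hσc : Continuous σ)
    (hσe : ∀ (g : G) (x : M) (t : unitInterval), σ (g • x) t = g • σ x t)
    (hσ0 : ∀ x : M, σ x 0 = x)
    (hns : ∀ x : M, x ∉ A → ∀ t : unitInterval, t ≠ 0 → σ x t ≠ x) :
    (Continuous fun x : M => σ x (clampedDist x A)) ∧
    (∀ (g : G) (x : M), σ (g • x) (clampedDist (g • x) A) = g • σ x (clampedDist x A)) ∧
    ({x : M | σ x (clampedDist x A) = x} = A) ∧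
    (Continuous fun z : M × unitInterval => σ z.1 (z.2 * clampedDist z.1 A)) ∧
    (∀ (g : G) (x : M) (s : unitInterval),
      σ (g • x) (s * clampedDist (g • x) A) = g • σ x (s * clampedDist x A)) ∧
    (∀ x : M, σ x ((0 : unitInterval) * clampedDist x A) = x) ∧
    (∀ x : M, σ x ((1 : unitInterval) * clampedDist x A) = σ x (clampedDist x A)) :=
  g_deformation_with_prescribed_fixed_point_set_general hd A hA hAc hAinv σ hσc hσe hσ0 hns
end
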